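/- arXiv:2510.07930 — 5 statements merged into one kernel-verified Lean document; each statement's English description precedes it below -/
import Mathlib

section
/- For all x > 0 and s > 0, the integral ∫₀^∞ exp(-s·cosh(x)) dx is bounded above by 1 + |ln(1 - e^{-s})|. -/
/-!
Split `(0, ∞)` at `a = arsinh (1 / (2s))` and `b = arsinh (1 / s)`. On `(0, a]` the integrand
is at most `e^{-s}`. For `x ≥ c > 0` it is at most `s sinh x e^{-s cosh x} / (s sinh c)`, an
exact derivative, so the pieces over `(a, b]` and `(b, ∞)` contribute at most
`2 e^{-s cosh a} - e^{-s cosh b} ≤ 8/9`, since `s cosh a = √(s² + 1/4)` and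
`s cosh b = √(s² + 1)`. (A single cut loses about `0.03` too much as `s → 0`.) It remains to
see `a e^{-s} ≤ 1/9 - log (1 - e^{-s})`: for `s ≥ 1/2` because `a ≤ 1` and
`e^{-s} ≤ -log (1 - e^{-s})`, for `s < 1/2` because `a ≤ log (1 + 1/s)` while
`-log (1 - e^{-s}) ≥ -log s ≥ log 2`.
-/

open MeasureTheory Real Set Filter Topology

lemma Real.self_le_cosh (x : ℝ) : x ≤ cosh x := by
  rcases le_or_gt 0 x with hx | hx
  · exact (self_le_sinh_iff.2 hx).trans (sinh_lt_cosh x).le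
  · linarith [one_le_cosh x]

lemma Real.arsinh_le_log_one_add_two_mul {x : ℝ} (hx : 0 ≤ x) :
    arsinh x ≤ log (1 + 2 * x) := by
  have hsqrt : √(1 + x ^ 2) ≤ 1 + x := (sqrt_le_left (by linarith)).2 (by nlinarith)
  exact log_le_log (by positivity) (by linarith)

lemma two_mul_exp_neg_sub_exp_neg_le {p q : ℝ} (hp : 1 / 2 ≤ p) (hpq : q ≤ p + 1 / 2) :
    2 * exp (-p) - exp (-q) ≤ 8 / 9 := by
  -- with `u = e^{-1/2} ≤ 2/3`: `2e^{-p} - e^{-q} ≤ e^{-p} (2 - u) ≤ u (2 - u) ≤ 8/9`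
  set u := exp (-(1 / 2))
  have hu : u ≤ 2 / 3 := by
    have h := add_one_le_exp (1 / 2)
    have h' : u * exp (1 / 2) = 1 := by rw [← exp_add]; norm_num
    nlinarith [exp_pos (-(1 / 2))]
  have hpu : exp (-p) ≤ u := exp_le_exp.2 (by linarith)
  have hqpu : exp (-p) * u ≤ exp (-q) := by
    rw [← exp_add]
    exact exp_le_exp.2 (by linarith)
  nlinarith [mul_le_mul_of_nonneg_right hpu (by linarith : (0 : ℝ) ≤ 2 - u)]

section

variable {s a b : ℝ}

lemma hasDerivAt_neg_exp_neg_mul_cosh (s x : ℝ) :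
    HasDerivAt (fun x => -exp (-s * cosh x)) (s * sinh x * exp (-s * cosh x)) x :=
  (((hasDerivAt_cosh x).const_mul (-s)).exp).neg.congr_deriv (by ring)

lemma tendsto_exp_neg_mul_cosh_atTop (hs : 0 < s) :
    Tendsto (fun x => exp (-s * cosh x)) atTop (𝓝 0) :=
  tendsto_exp_atBot.comp <|
    (tendsto_atTop_mono self_le_cosh tendsto_id).const_mul_atTop_of_neg (neg_lt_zero.2 hs)

lemma integrableOn_Ioi_exp_neg_mul_cosh (hs : 0 < s) (a : ℝ) :
    IntegrableOn (fun x => exp (-s * cosh x)) (Ioi a) := by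
  refine (exp_neg_integrableOn_Ioi a hs).mono' (by fun_prop) (Eventually.of_forall fun x => ?_)
  rw [norm_of_nonneg (exp_pos _).le]
  exact exp_le_exp.2 (by nlinarith [self_le_cosh x])

lemma integral_Ioc_mul_sinh_mul_exp_neg_mul_cosh (s : ℝ) (hab : a ≤ b) :
    ∫ x in Ioc a b, s * sinh x * exp (-s * cosh x) = exp (-s * cosh a) - exp (-s * cosh b) := by
  rw [← intervalIntegral.integral_of_le hab,
    intervalIntegral.integral_eq_sub_of_hasDerivAt
      (fun x _ => hasDerivAt_neg_exp_neg_mul_cosh s x)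
      ((by fun_prop : Continuous fun x => s * sinh x * exp (-s * cosh x)).intervalIntegrable _ _)]
  ring

lemma mul_sinh_mul_exp_neg_mul_cosh_nonneg (hs : 0 ≤ s) {x : ℝ} (hx : 0 ≤ x) :
    0 ≤ s * sinh x * exp (-s * cosh x) :=
  mul_nonneg (mul_nonneg hs (sinh_nonneg_iff.2 hx)) (exp_pos _).le

lemma tendsto_neg_exp_neg_mul_cosh_atTop (hs : 0 < s) :
    Tendsto (fun x => -exp (-s * cosh x)) atTop (𝓝 0) := by
  simpa using (tendsto_exp_neg_mul_cosh_atTop hs).neg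

lemma integrableOn_Ioi_mul_sinh_mul_exp_neg_mul_cosh (hs : 0 < s) (ha : 0 ≤ a) :
    IntegrableOn (fun x => s * sinh x * exp (-s * cosh x)) (Ioi a) :=
  integrableOn_Ioi_deriv_of_nonneg' (fun x _ => hasDerivAt_neg_exp_neg_mul_cosh s x)
    (fun _ hx => mul_sinh_mul_exp_neg_mul_cosh_nonneg hs.le (ha.trans hx.out.le))
    (tendsto_neg_exp_neg_mul_cosh_atTop hs)

lemma integral_Ioi_mul_sinh_mul_exp_neg_mul_cosh (hs : 0 < s) (ha : 0 ≤ a) :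
    ∫ x in Ioi a, s * sinh x * exp (-s * cosh x) = exp (-s * cosh a) := by
  rw [integral_Ioi_of_hasDerivAt_of_nonneg' (fun x _ => hasDerivAt_neg_exp_neg_mul_cosh s x)
    (fun _ hx => mul_sinh_mul_exp_neg_mul_cosh_nonneg hs.le (ha.trans hx.out.le))
    (tendsto_neg_exp_neg_mul_cosh_atTop hs)]
  ring

lemma mul_sinh_mul_exp_neg_mul_cosh_le (hs : 0 ≤ s) {x : ℝ} (hx : a ≤ x) :
    s * sinh a * exp (-s * cosh x) ≤ s * sinh x * exp (-s * cosh x) := by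
  gcongr
  exact sinh_le_sinh.2 hx

lemma integral_Ioc_exp_neg_mul_cosh_le (hs : 0 ≤ s) (hab : a ≤ b) :
    ∫ x in Ioc a b, exp (-s * cosh x) ≤ (b - a) * exp (-s) := by
  calc ∫ x in Ioc a b, exp (-s * cosh x) ≤ ∫ _ in Ioc a b, exp (-s) :=
        setIntegral_mono_on (by fun_prop : Continuous fun x => exp (-s * cosh x)).integrableOn_Ioc
          (integrableOn_const (by simp) (by simp)) measurableSet_Ioc fun x _ =>
            exp_le_exp.2 (by nlinarith [one_le_cosh x])
    _ = (b - a) * exp (-s) := by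
        rw [setIntegral_const, volume_real_Ioc_of_le hab, smul_eq_mul]

lemma mul_integral_Ioc_exp_neg_mul_cosh_le (hs : 0 ≤ s) (hab : a ≤ b) :
    s * sinh a * ∫ x in Ioc a b, exp (-s * cosh x) ≤
      exp (-s * cosh a) - exp (-s * cosh b) := by
  rw [← integral_const_mul, ← integral_Ioc_mul_sinh_mul_exp_neg_mul_cosh s hab]
  exact setIntegral_mono_on (by fun_prop : Continuous fun x => _).integrableOn_Ioc
    (by fun_prop : Continuous fun x => s * sinh x * exp (-s * cosh x)).integrableOn_Ioc
    measurableSet_Ioc fun x hx => mul_sinh_mul_exp_neg_mul_cosh_le hs hx.1.le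

lemma mul_integral_Ioi_exp_neg_mul_cosh_le (hs : 0 < s) (ha : 0 ≤ a) :
    s * sinh a * ∫ x in Ioi a, exp (-s * cosh x) ≤ exp (-s * cosh a) := by
  rw [← integral_const_mul, ← integral_Ioi_mul_sinh_mul_exp_neg_mul_cosh hs ha]
  exact setIntegral_mono_on ((integrableOn_Ioi_exp_neg_mul_cosh hs a).const_mul _)
    (integrableOn_Ioi_mul_sinh_mul_exp_neg_mul_cosh hs ha)
    measurableSet_Ioi fun x hx => mul_sinh_mul_exp_neg_mul_cosh_le hs.le hx.out.le

lemma integral_Ioi_zero_exp_neg_mul_cosh_le (hs : 0 < s) (ha : 0 < a) (hab : a ≤ b) :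
    ∫ x in Ioi 0, exp (-s * cosh x) ≤ a * exp (-s) +
      (exp (-s * cosh a) - exp (-s * cosh b)) / (s * sinh a) +
        exp (-s * cosh b) / (s * sinh b) := by
  have hint : ∀ a b : ℝ, IntegrableOn (fun x => exp (-s * cosh x)) (Ioc a b) := fun a b =>
    (by fun_prop : Continuous fun x => exp (-s * cosh x)).integrableOn_Ioc
  have hsplit : ∫ x in Ioi 0, exp (-s * cosh x) = (∫ x in Ioc 0 a, exp (-s * cosh x)) +
      (∫ x in Ioc a b, exp (-s * cosh x)) + ∫ x in Ioi b, exp (-s * cosh x) := by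
    rw [← setIntegral_union (Ioc_disjoint_Ioc_of_le le_rfl) measurableSet_Ioc (hint 0 a)
        (hint a b), Ioc_union_Ioc_eq_Ioc ha.le hab,
      ← setIntegral_union (Ioc_disjoint_Ioi le_rfl) measurableSet_Ioi (hint 0 b)
        (integrableOn_Ioi_exp_neg_mul_cosh hs b), Ioc_union_Ioi_eq_Ioi (ha.le.trans hab)]
  have hsa : 0 < s * sinh a := mul_pos hs (sinh_pos_iff.2 ha)
  have hsb : 0 < s * sinh b := mul_pos hs (sinh_pos_iff.2 (ha.trans_le hab))
  have h₁ := integral_Ioc_exp_neg_mul_cosh_le hs.le ha.le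
  have h₂ := (le_div_iff₀' hsa).2 (mul_integral_Ioc_exp_neg_mul_cosh_le hs.le hab)
  have h₃ := (le_div_iff₀' hsb).2 (mul_integral_Ioi_exp_neg_mul_cosh_le hs (ha.le.trans hab))
  rw [sub_zero] at h₁
  linarith

lemma two_mul_exp_neg_mul_cosh_sub_le (hs : 0 < s) (ha : s * sinh a = 1 / 2)
    (hb : s * sinh b = 1) : 2 * exp (-s * cosh a) - exp (-s * cosh b) ≤ 8 / 9 := by
  have hpa : 0 < s * cosh a := mul_pos hs (cosh_pos a)
  have hpb : 0 < s * cosh b := mul_pos hs (cosh_pos b)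
  have hsqa : (s * cosh a) ^ 2 = s ^ 2 + 1 / 4 := by
    rw [mul_pow, cosh_sq, mul_add, ← mul_pow, ha]; ring
  have hsqb : (s * cosh b) ^ 2 = s ^ 2 + 1 := by
    rw [mul_pow, cosh_sq, mul_add, ← mul_pow, hb]; ring
  have hp : 1 / 2 ≤ s * cosh a := by nlinarith
  simp only [neg_mul]
  exact two_mul_exp_neg_sub_exp_neg_le hp (by nlinarith)

lemma arsinh_mul_exp_neg_le (hs : 0 < s) :
    arsinh (1 / (2 * s)) * exp (-s) ≤ 1 / 9 - log (1 - exp (-s)) := by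
  have hA : 0 ≤ arsinh (1 / (2 * s)) := arsinh_nonneg_iff.2 (by positivity)
  have he : exp (-s) < 1 := exp_lt_one_iff.2 (by linarith)
  rcases le_or_gt (1 / 2) s with hs' | hs'
  · have hA1 : arsinh (1 / (2 * s)) ≤ 1 := by
      calc arsinh (1 / (2 * s)) ≤ sinh (arsinh (1 / (2 * s))) := self_le_sinh_iff.2 hA
        _ = 1 / (2 * s) := sinh_arsinh _
        _ ≤ 1 := by rw [div_le_one (by positivity)]; linarith
    have hlog := log_le_sub_one_of_pos (by linarith : 0 < 1 - exp (-s))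
    nlinarith [exp_pos (-s)]
  · set L := -log s
    have hL : 2 / 3 ≤ L := by
      have h2 : log 2 ≤ log s⁻¹ :=
        log_le_log two_pos (by rw [le_inv_comm₀ two_pos hs]; linarith)
      rw [log_inv] at h2
      linarith [log_two_gt_d9]
    have hAL : arsinh (1 / (2 * s)) ≤ s + L := by
      calc arsinh (1 / (2 * s)) ≤ log (1 + 2 * (1 / (2 * s))) :=
            arsinh_le_log_one_add_two_mul (by positivity)
        _ = log (1 + s) + L := by
          rw [show 1 + 2 * (1 / (2 * s)) = (1 + s) / s by field_simp; ring,
            log_div (by positivity) hs.ne']; ring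
        _ ≤ s + L := by linarith [log_le_sub_one_of_pos (by linarith : 0 < 1 + s)]
    have hlogs : log (1 - exp (-s)) ≤ -L := by
      rw [neg_neg]; exact log_le_log (by linarith) (by linarith [add_one_le_exp (-s)])
    have hes : exp (-s) * (1 + s) ≤ 1 := by
      have h := add_one_le_exp s
      have h' : exp (-s) * exp s = 1 := by rw [← exp_add]; simp
      nlinarith [exp_pos (-s)]
    nlinarith [mul_le_mul_of_nonneg_right hAL (exp_pos (-s)).le, exp_pos (-s)]

end

/-- For all `s > 0`, `∫₀^∞ exp (-s * cosh x) dx ≤ 1 + |ln (1 - e^{-s})|`. -/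
theorem stmt_0 (s : ℝ) (hs : 0 < s) :
    ∫ x in Set.Ioi (0 : ℝ), Real.exp (-s * Real.cosh x) ≤
      1 + |Real.log (1 - Real.exp (-s))| := by
  set a := arsinh (1 / (2 * s))
  set b := arsinh (1 / s)
  have ha : 0 < a := arsinh_pos_iff.2 (by positivity)
  have hab : a ≤ b := arsinh_le_arsinh.2 (by gcongr; linarith)
  have hsa : s * sinh a = 1 / 2 := by rw [sinh_arsinh]; field_simp
  have hsb : s * sinh b = 1 := by rw [sinh_arsinh]; field_simp
  have hpieces := integral_Ioi_zero_exp_neg_mul_cosh_le hs ha hab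
  rw [hsa, hsb] at hpieces
  have htail := two_mul_exp_neg_mul_cosh_sub_le hs hsa hsb
  have hhead := arsinh_mul_exp_neg_le hs
  have hlog : log (1 - exp (-s)) ≤ 0 :=
    log_nonpos (by linarith [exp_le_one_iff.2 (neg_nonpos.2 hs.le)]) (by linarith [exp_pos (-s)])
  rw [abs_of_nonpos hlog]
  linarith
end

section
/- For all s > 0 and σ > 0, the integral ∫_σ^∞ exp(-s·cosh(x)) dx is bounded above by (1 + L(s))·exp(-s·cosh(σ)), where L(s) = 1 + |ln(1 - e^{-s})|. -/
/-!
Split `(σ, ∞)` at `σ + U`. On `(σ, σ + U]` the integrand is at most `exp (-s cosh σ)`, since `cosh`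
increases on `[0, ∞)`. On the tail, inserting the factor `sinh x / sinh (σ + U) ≥ 1` turns the
integrand into an exact derivative, so the tail is at most `exp (-s cosh σ) / (s sinh U)`.
The choice `U = 1 - log p = L s` with `p = 1 - e^{-s}` makes `s sinh U ≥ p sinh U ≥ 1`, because
`2 p sinh (1 - log p) = e - p² / e ≥ e - 1 / e ≥ 2`.
-/

open Real MeasureTheory Set Filter Topology

lemma Real.tendsto_cosh_atTop : Tendsto cosh atTop atTop := by
  refine tendsto_atTop_mono (fun x => ?_) (tendsto_exp_atTop.atTop_div_const two_pos)
  rw [cosh_eq]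
  linarith [exp_pos (-x)]

lemma continuous_exp_neg_mul_cosh (s : ℝ) : Continuous fun x => exp (-s * cosh x) := by
  fun_prop

lemma hasDerivAt_exp_neg_mul_cosh_div_neg {s : ℝ} (hs : s ≠ 0) (x : ℝ) :
    HasDerivAt (fun x => exp (-s * cosh x) / -s) (sinh x * exp (-s * cosh x)) x := by
  refine (((hasDerivAt_cosh x).const_mul (-s)).exp.div_const (-s)).congr_deriv ?_
  field_simp

lemma tendsto_exp_neg_mul_cosh_div_neg {s : ℝ} (hs : 0 < s) :
    Tendsto (fun x => exp (-s * cosh x) / -s) atTop (𝓝 0) := by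
  have h : Tendsto (fun x => exp (-s * cosh x)) atTop (𝓝 0) :=
    tendsto_exp_atBot.comp (tendsto_cosh_atTop.const_mul_atTop_of_neg (neg_neg_of_pos hs))
  simpa using h.div_const (-s)

lemma sinh_mul_exp_neg_mul_cosh_nonneg (s : ℝ) {x : ℝ} (hx : 0 ≤ x) :
    0 ≤ sinh x * exp (-s * cosh x) :=
  mul_nonneg (sinh_nonneg_iff.2 hx) (exp_pos _).le

lemma integrableOn_sinh_mul_exp_neg_mul_cosh_Ioi {s : ℝ} (hs : 0 < s) {a : ℝ} (ha : 0 ≤ a) :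
    IntegrableOn (fun x => sinh x * exp (-s * cosh x)) (Ioi a) :=
  integrableOn_Ioi_deriv_of_nonneg' (fun x _ => hasDerivAt_exp_neg_mul_cosh_div_neg hs.ne' x)
    (fun _ hx => sinh_mul_exp_neg_mul_cosh_nonneg s (ha.trans hx.out.le))
    (tendsto_exp_neg_mul_cosh_div_neg hs)

lemma integral_sinh_mul_exp_neg_mul_cosh_Ioi {s : ℝ} (hs : 0 < s) {a : ℝ} (ha : 0 ≤ a) :
    ∫ x in Ioi a, sinh x * exp (-s * cosh x) = exp (-s * cosh a) / s := by
  rw [integral_Ioi_of_hasDerivAt_of_nonneg'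
    (fun x _ => hasDerivAt_exp_neg_mul_cosh_div_neg hs.ne' x)
    (fun _ hx => sinh_mul_exp_neg_mul_cosh_nonneg s (ha.trans hx.out.le))
    (tendsto_exp_neg_mul_cosh_div_neg hs)]
  field_simp
  ring

lemma exp_neg_mul_cosh_le_inv_sinh_mul {s a x : ℝ} (ha : 0 < a) (hx : a ≤ x) :
    exp (-s * cosh x) ≤ (sinh a)⁻¹ * (sinh x * exp (-s * cosh x)) := by
  rw [← mul_assoc, ← div_eq_inv_mul]
  exact le_mul_of_one_le_left (exp_pos _).le
    ((one_le_div (sinh_pos_iff.2 ha)).2 (sinh_le_sinh.2 hx))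

lemma integrableOn_exp_neg_mul_cosh_Ioi {s a : ℝ} (hs : 0 < s) (ha : 0 < a) :
    IntegrableOn (fun x => exp (-s * cosh x)) (Ioi a) := by
  refine ((integrableOn_sinh_mul_exp_neg_mul_cosh_Ioi hs ha.le).const_mul (sinh a)⁻¹).mono'
    (continuous_exp_neg_mul_cosh s).aestronglyMeasurable ?_
  filter_upwards [ae_restrict_mem measurableSet_Ioi] with x hx
  rw [norm_of_nonneg (exp_pos _).le]
  exact exp_neg_mul_cosh_le_inv_sinh_mul ha hx.out.le

lemma integral_exp_neg_mul_cosh_Ioi_le {s a : ℝ} (hs : 0 < s) (ha : 0 < a) :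
    ∫ x in Ioi a, exp (-s * cosh x) ≤ exp (-s * cosh a) / (s * sinh a) :=
  calc ∫ x in Ioi a, exp (-s * cosh x)
      ≤ ∫ x in Ioi a, (sinh a)⁻¹ * (sinh x * exp (-s * cosh x)) :=
        setIntegral_mono_on (integrableOn_exp_neg_mul_cosh_Ioi hs ha)
          ((integrableOn_sinh_mul_exp_neg_mul_cosh_Ioi hs ha.le).const_mul _) measurableSet_Ioi
          fun _ hx => exp_neg_mul_cosh_le_inv_sinh_mul ha hx.out.le
    _ = exp (-s * cosh a) / (s * sinh a) := by
        rw [integral_const_mul, integral_sinh_mul_exp_neg_mul_cosh_Ioi hs ha.le]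
        field_simp

lemma integral_exp_neg_mul_cosh_Ioc_le {s σ b : ℝ} (hs : 0 ≤ s) (hσ : 0 ≤ σ) (hσb : σ ≤ b) :
    ∫ x in Ioc σ b, exp (-s * cosh x) ≤ (b - σ) * exp (-s * cosh σ) := by
  calc ∫ x in Ioc σ b, exp (-s * cosh x) ≤ ∫ _ in Ioc σ b, exp (-s * cosh σ) := by
        refine setIntegral_mono_on ?_ (integrableOn_const measure_Ioc_lt_top.ne) measurableSet_Ioc
          fun x hx => ?_
        · exact (continuous_exp_neg_mul_cosh s).integrableOn_Ioc
        · have hcosh : cosh σ ≤ cosh x :=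
            cosh_le_cosh.2 (abs_le_abs_of_nonneg hσ hx.1.le)
          exact exp_le_exp.2 (by nlinarith)
    _ = (b - σ) * exp (-s * cosh σ) := by
        rw [setIntegral_const, smul_eq_mul, volume_real_Ioc_of_le hσb]

lemma integral_exp_neg_mul_cosh_Ioi_le_mul_exp {s σ U : ℝ} (hs : 0 < s) (hσ : 0 ≤ σ)
    (hU : 0 < U) :
    ∫ x in Ioi σ, exp (-s * cosh x) ≤ (U + 1 / (s * sinh U)) * exp (-s * cosh σ) := by
  have hσU : σ < σ + U := by linarith
  have hσU_pos : 0 < σ + U := by linarith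
  have htail := integral_exp_neg_mul_cosh_Ioi_le hs hσU_pos
  have hhead := integral_exp_neg_mul_cosh_Ioc_le hs.le hσ hσU.le
  have hhead_int : IntegrableOn (fun x => exp (-s * cosh x)) (Ioc σ (σ + U)) :=
    (continuous_exp_neg_mul_cosh s).integrableOn_Ioc
  have htail' : exp (-s * cosh (σ + U)) / (s * sinh (σ + U)) ≤
      exp (-s * cosh σ) / (s * sinh U) := by
    have hcosh : cosh σ ≤ cosh (σ + U) :=
      cosh_le_cosh.2 (abs_le_abs_of_nonneg hσ hσU.le)
    have hexp : exp (-s * cosh (σ + U)) ≤ exp (-s * cosh σ) := exp_le_exp.2 (by nlinarith)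
    have hsinh : sinh U ≤ sinh (σ + U) := sinh_le_sinh.2 (by linarith)
    have hsinhU : 0 < s * sinh U := mul_pos hs (sinh_pos_iff.2 hU)
    calc exp (-s * cosh (σ + U)) / (s * sinh (σ + U))
        ≤ exp (-s * cosh σ) / (s * sinh (σ + U)) := by gcongr
      _ ≤ exp (-s * cosh σ) / (s * sinh U) := by gcongr
  rw [← Ioc_union_Ioi_eq_Ioi hσU.le,
    setIntegral_union (Ioc_disjoint_Ioi le_rfl) measurableSet_Ioi hhead_int
      (integrableOn_exp_neg_mul_cosh_Ioi hs hσU_pos)]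
  calc _ ≤ (σ + U - σ) * exp (-s * cosh σ) + exp (-s * cosh σ) / (s * sinh U) :=
        add_le_add hhead (htail.trans htail')
    _ = _ := by ring

lemma one_le_mul_sinh_one_sub_log {p : ℝ} (hp0 : 0 < p) (hp1 : p ≤ 1) :
    1 ≤ p * sinh (1 - log p) := by
  have he : 2.7182818283 < exp 1 := exp_one_gt_d9
  have hsinh : 2 * (p * sinh (1 - log p)) = exp 1 - p ^ 2 / exp 1 := by
    rw [sinh_eq, exp_sub, exp_log hp0, neg_sub, exp_sub, exp_log hp0]
    field_simp
  have hp2 : p ^ 2 / exp 1 ≤ 1 / exp 1 := by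
    gcongr
    nlinarith
  -- `e - 1/e ≥ 2` because `e ≥ 1 + √2`
  have h1e : 1 / exp 1 ≤ exp 1 - 2 := by
    rw [div_le_iff₀ (exp_pos 1)]
    nlinarith
  linarith

/-- For all `s > 0` and `σ > 0`,
`∫_σ^∞ exp (-s * cosh x) dx ≤ (1 + L s) * exp (-s * cosh σ)`,
where `L s = 1 + |ln (1 - e^{-s})|`. -/
theorem stmt_1 (s σ : ℝ) (hs : 0 < s) (hσ : 0 < σ) :
    ∫ x in Set.Ioi σ, Real.exp (-s * Real.cosh x) ≤
      (1 + (1 + |Real.log (1 - Real.exp (-s))|)) * Real.exp (-s * Real.cosh σ) := by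
  set p := 1 - exp (-s)
  have hp0 : 0 < p := sub_pos.2 (exp_lt_one_iff.2 (neg_lt_zero.2 hs))
  have hp1 : p ≤ 1 := sub_le_self _ (exp_pos _).le
  have hps : p ≤ s := by linarith [add_one_le_exp (-s)]
  have hU : 1 + |log p| = 1 - log p := by
    rw [abs_of_nonpos (log_nonpos hp0.le hp1)]
    ring
  have hUpos : 0 < 1 - log p := by linarith [log_nonpos hp0.le hp1]
  have hsinh : 1 ≤ s * sinh (1 - log p) :=
    (one_le_mul_sinh_one_sub_log hp0 hp1).trans
      (mul_le_mul_of_nonneg_right hps (sinh_pos_iff.2 hUpos).le)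
  calc ∫ x in Ioi σ, exp (-s * cosh x)
      ≤ (1 - log p + 1 / (s * sinh (1 - log p))) * exp (-s * cosh σ) :=
        integral_exp_neg_mul_cosh_Ioi_le_mul_exp hs hσ.le hUpos
    _ ≤ (1 + (1 + |log p|)) * exp (-s * cosh σ) := by
        rw [hU]
        gcongr ?_ * _
        linarith [(div_le_one (by linarith)).2 hsinh]
end

section
/- Let 0 < α, β, γ ≤ 1 with α_k ∈ (0,α), β_j ∈ (0,β), a, b > 0, a_k, b_j ≥ 0, and suppose α + γ + Σ_{k=1}^K α_k ≤ 1 and β ≤ γ. Let θ ∈ (π/2, π). Then for every z with 0 < |arg z| < θ, writing η(z) = z^γ (1 + a z^α + Σ_k a_k z^{α_k})(1 + b z^β + Σ_j b_j z^{β_j})^{-1} (principal branches), one has |arg η(z)| ≤ (α + γ + Σ_{k=1}^K α_k)·|arg z| ≤ θ; in particular η(z) lies in the sector Σ_θ = {w ∈ ℂ \ {0} : |arg w| < θ}. -/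
/-!
Conjugation commutes with `η` (off the negative real axis) and preserves `|arg|`, so it suffices
to take `0 < arg z`. Then every summand of `P = 1 + a z^α + Σ a_k z^{α_k}` lies in the convex
sector `0 ≤ arg ≤ α arg z`, with `a z^α` off the real axis, so `arg P ∈ (0, α arg z]`; likewise
`arg Q ∈ (0, β arg z]` for the denominator. As all angles stay inside `(-π, π]`, the arguments
add: `arg η = γ arg z + arg P - arg Q ∈ [(γ - β) arg z, (α + γ) arg z]`, which is nonnegative
because `β ≤ γ`.
-/

open Complex ComplexConjugate

namespace Complex

lemma abs_arg_conj (x : ℂ) : |(conj x).arg| = |x.arg| := by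
  rw [arg_conj]; split_ifs <;> simp [*]

lemma arg_pos_of_im_pos {w : ℂ} (h : 0 < w.im) : 0 < w.arg :=
  (arg_nonneg_iff.2 h.le).lt_of_ne fun h0 => h.ne' (arg_eq_zero_iff.1 h0.symm).2

lemma arg_cpow_ofReal {z : ℂ} (hz : z ≠ 0) {c : ℝ} (h : z.arg * c ∈ Set.Ioc (-Real.pi) Real.pi) :
    (z ^ (c : ℂ)).arg = z.arg * c := by
  rw [cpow_ofReal, ofReal_cos, ofReal_sin]
  exact arg_mul_cos_add_sin_mul_I (Real.rpow_pos_of_pos (norm_pos_iff.2 hz) c) h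

lemma im_cpow_ofReal_mul_exp (z : ℂ) (c t : ℝ) :
    (z ^ (c : ℂ) * exp (t * I)).im = ‖z‖ ^ c * Real.sin (z.arg * c + t) := by
  rw [cpow_ofReal, exp_mul_I, ← ofReal_cos, ← ofReal_sin, Real.sin_add]
  simp only [mul_im, mul_re, add_re, add_im, ofReal_re, ofReal_im, I_re, I_im]
  ring

lemma arg_le_of_im_mul_exp_nonpos {w : ℂ} {ψ : ℝ} (hψ : 0 ≤ ψ) (hw : 0 < w.im)
    (h : (w * exp (-ψ * I)).im ≤ 0) : w.arg ≤ ψ := by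
  by_contra! hlt
  have hrot : (w * exp (-ψ * I)).im = ‖w‖ * Real.sin (w.arg - ψ) := by
    conv_lhs => rw [← norm_mul_exp_arg_mul_I w]
    rw [mul_assoc, ← exp_add, ← add_mul, ← ofReal_neg, ← ofReal_add, im_ofReal_mul,
      exp_ofReal_mul_I_im, ← sub_eq_add_neg]
  have hsin : 0 < Real.sin (w.arg - ψ) :=
    Real.sin_pos_of_pos_of_lt_pi (by linarith) (by linarith [arg_lt_pi_iff.2 (Or.inr hw.ne')])
  have hw0 : w ≠ 0 := fun h0 => by simp [h0] at hw
  nlinarith [norm_pos_iff.2 hw0]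

end Complex

section PowerSum

variable {ι : Type*} [Fintype ι]

noncomputable def powerSum (a α : ℝ) (ak αk : ι → ℝ) (z : ℂ) : ℂ :=
  1 + a * z ^ (α : ℂ) + ∑ k, ak k * z ^ (αk k : ℂ)

lemma powerSum_conj {z : ℂ} (hz : z.arg ≠ Real.pi) (a α : ℝ) (ak αk : ι → ℝ) :
    powerSum a α ak αk (conj z) = conj (powerSum a α ak αk z) := by
  simp only [powerSum, conj_cpow _ _ hz, map_add, map_one, map_mul, map_sum, conj_ofReal]

lemma im_powerSum_mul_exp (a α : ℝ) (ak αk : ι → ℝ) (z : ℂ) (t : ℝ) :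
    (powerSum a α ak αk z * exp (t * I)).im = Real.sin t + a * (‖z‖ ^ α *
      Real.sin (z.arg * α + t)) + ∑ k, ak k * (‖z‖ ^ αk k * Real.sin (z.arg * αk k + t)) := by
  simp only [powerSum, add_mul, one_mul, Finset.sum_mul, mul_assoc, add_im, im_sum,
    im_ofReal_mul, im_cpow_ofReal_mul_exp, exp_ofReal_mul_I_im]

/-- The sector `0 ≤ arg ≤ α arg z` is cut out by `0 ≤ im w` and `im (w e^{-iα arg z}) ≤ 0`,
both linear in `w`, and every summand of `powerSum` satisfies them. -/
lemma arg_powerSum_mem_Ioc {a α : ℝ} {ak αk : ι → ℝ} {z : ℂ} (hz : 0 < z.arg) (hα : 0 < α)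
    (hαz : α * z.arg < Real.pi) (ha : 0 < a) (hak : ∀ k, 0 ≤ ak k)
    (hαk : ∀ k, αk k ∈ Set.Icc 0 α) :
    (powerSum a α ak αk z).arg ∈ Set.Ioc 0 (α * z.arg) := by
  have hz0 : z ≠ 0 := fun h => by simp [h] at hz
  have hr : ∀ c : ℝ, 0 < ‖z‖ ^ c := fun c => Real.rpow_pos_of_pos (norm_pos_iff.2 hz0) c
  have hαk_le : ∀ k, z.arg * αk k ≤ z.arg * α := fun k =>
    mul_le_mul_of_nonneg_left (hαk k).2 hz.le
  have him : 0 < (powerSum a α ak αk z).im := by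
    have h := im_powerSum_mul_exp a α ak αk z 0
    simp only [ofReal_zero, zero_mul, exp_zero, mul_one, add_zero, Real.sin_zero] at h
    have hlead : 0 < a * (‖z‖ ^ α * Real.sin (z.arg * α)) :=
      mul_pos ha <| mul_pos (hr α) <|
        Real.sin_pos_of_pos_of_lt_pi (mul_pos hz hα) (by linarith)
    have hterms : 0 ≤ ∑ k, ak k * (‖z‖ ^ αk k * Real.sin (z.arg * αk k)) :=
      Finset.sum_nonneg fun k _ => mul_nonneg (hak k) <| mul_nonneg (hr _).le <|
        Real.sin_nonneg_of_nonneg_of_le_pi (mul_nonneg hz.le (hαk k).1) (by linarith [hαk_le k])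
    linarith
  refine ⟨arg_pos_of_im_pos him, arg_le_of_im_mul_exp_nonpos (by positivity) him ?_⟩
  rw [← ofReal_neg, im_powerSum_mul_exp]
  have hneg : Real.sin (-(α * z.arg)) ≤ 0 := by
    rw [Real.sin_neg, neg_nonpos]
    exact Real.sin_nonneg_of_nonneg_of_le_pi (by positivity) hαz.le
  have hedge : z.arg * α + -(α * z.arg) = 0 := by ring
  have hterms : ∑ k, ak k * (‖z‖ ^ αk k * Real.sin (z.arg * αk k + -(α * z.arg))) ≤ 0 :=
    Finset.sum_nonpos fun k _ => mul_nonpos_of_nonneg_of_nonpos (hak k) <|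
      mul_nonpos_of_nonneg_of_nonpos (hr _).le <|
        Real.sin_nonpos_of_nonpos_of_neg_pi_le (by linarith [hαk_le k])
          (by nlinarith [mul_nonneg hz.le (hαk k).1])
  rw [hedge, Real.sin_zero, mul_zero, mul_zero, add_zero]
  linarith

end PowerSum

section PowerSumRatio

variable {ι κ : Type*} [Fintype ι] [Fintype κ]

/-- The function `η` of the statement. -/
noncomputable def powerSumRatio (γ a α b β : ℝ) (ak αk : ι → ℝ) (bj βj : κ → ℝ) (z : ℂ) : ℂ :=
  z ^ (γ : ℂ) * powerSum a α ak αk z * (powerSum b β bj βj z)⁻¹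

variable {γ a α b β : ℝ} {ak αk : ι → ℝ} {bj βj : κ → ℝ}

lemma powerSumRatio_conj {z : ℂ} (hz : z.arg ≠ Real.pi) :
    powerSumRatio γ a α b β ak αk bj βj (conj z) =
      conj (powerSumRatio γ a α b β ak αk bj βj z) := by
  rw [powerSumRatio, powerSumRatio, powerSum_conj hz, powerSum_conj hz, conj_cpow _ _ hz,
    conj_ofReal, map_mul, map_mul, map_inv₀]

lemma arg_powerSumRatio_mem_Icc (hα : 0 < α) (hβ : 0 < β) (hβγ : β ≤ γ)
    (ha : 0 < a) (hb : 0 < b) (hak : ∀ k, 0 ≤ ak k) (hbj : ∀ j, 0 ≤ bj j)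
    (hαk : ∀ k, αk k ∈ Set.Icc 0 α) (hβj : ∀ j, βj j ∈ Set.Icc 0 β)
    {z : ℂ} (hz : 0 < z.arg) (hαγ : (α + γ) * z.arg < Real.pi) :
    powerSumRatio γ a α b β ak αk bj βj z ≠ 0 ∧
      (powerSumRatio γ a α b β ak αk bj βj z).arg ∈ Set.Icc 0 ((α + γ) * z.arg) := by
  have hz0 : z ≠ 0 := fun h => by simp [h] at hz
  have hγ : 0 < γ := hβ.trans_le hβγ
  obtain ⟨hP, hP'⟩ := arg_powerSum_mem_Ioc hz hα (by nlinarith) ha hak hαk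
  obtain ⟨hQ, hQ'⟩ := arg_powerSum_mem_Ioc hz hβ (by nlinarith) hb hbj hβj
  set P := powerSum a α ak αk z
  set Q := powerSum b β bj βj z
  have hP0 : P ≠ 0 := fun h => by simp [h] at hP
  have hQ0 : Q ≠ 0 := fun h => by simp [h] at hQ
  have hzγ0 : z ^ (γ : ℂ) ≠ 0 := by simp [hz0]
  have hzγ : (z ^ (γ : ℂ)).arg = z.arg * γ :=
    arg_cpow_ofReal hz0 ⟨by nlinarith [Real.pi_pos], by nlinarith⟩
  have hQinv : (Q⁻¹).arg = -Q.arg := by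
    rw [arg_inv, if_neg (by nlinarith)]
  have hzγP : (z ^ (γ : ℂ) * P).arg = z.arg * γ + P.arg := by
    rw [arg_mul hzγ0 hP0 (by rw [hzγ]; constructor <;> nlinarith [Real.pi_pos]), hzγ]
  have harg : (z ^ (γ : ℂ) * P * Q⁻¹).arg = z.arg * γ + P.arg - Q.arg := by
    rw [arg_mul (mul_ne_zero hzγ0 hP0) (inv_ne_zero hQ0)
      (by rw [hzγP, hQinv]; constructor <;> nlinarith [Real.pi_pos]), hzγP, hQinv,
      sub_eq_add_neg]
  refine ⟨mul_ne_zero (mul_ne_zero hzγ0 hP0) (inv_ne_zero hQ0), ?_⟩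
  rw [powerSumRatio, harg]
  constructor <;> nlinarith

lemma abs_arg_powerSumRatio_le (hα : 0 < α) (hβ : 0 < β) (hβγ : β ≤ γ)
    (ha : 0 < a) (hb : 0 < b) (hak : ∀ k, 0 ≤ ak k) (hbj : ∀ j, 0 ≤ bj j)
    (hαk : ∀ k, αk k ∈ Set.Icc 0 α) (hβj : ∀ j, βj j ∈ Set.Icc 0 β)
    {z : ℂ} (hz : z.arg ≠ 0)
    (hαγ : (α + γ) * |z.arg| < Real.pi) :
    powerSumRatio γ a α b β ak αk bj βj z ≠ 0 ∧
      |(powerSumRatio γ a α b β ak αk bj βj z).arg| ≤ (α + γ) * |z.arg| := by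
  rcases hz.lt_or_gt with hneg | hpos
  · have hπ : z.arg ≠ Real.pi := by linarith [Real.pi_pos]
    have hconj : (conj z).arg = |z.arg| := by rw [arg_conj, if_neg hπ, abs_of_neg hneg]
    obtain ⟨hne, harg⟩ := arg_powerSumRatio_mem_Icc hα hβ hβγ ha hb hak hbj hαk hβj
      (hconj ▸ abs_pos.2 hz) (hconj ▸ hαγ)
    rw [powerSumRatio_conj hπ] at hne harg
    rw [hconj] at harg
    rw [← abs_arg_conj]
    exact ⟨(map_ne_zero _).1 hne, (abs_of_nonneg harg.1).trans_le harg.2⟩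
  · rw [abs_of_pos hpos] at *
    obtain ⟨hne, harg⟩ := arg_powerSumRatio_mem_Icc hα hβ hβγ ha hb hak hbj hαk hβj hpos hαγ
    exact ⟨hne, (abs_of_nonneg harg.1).trans_le harg.2⟩

end PowerSumRatio

theorem stmt_4_general (K J : ℕ) (α β γ a b : ℝ) (αk : Fin K → ℝ) (βj : Fin J → ℝ)
    (ak : Fin K → ℝ) (bj : Fin J → ℝ)
    (hα : 0 < α) (hβ : 0 < β)
    (hαk : ∀ k, 0 < αk k ∧ αk k < α) (hβj : ∀ j, 0 < βj j ∧ βj j < β)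
    (ha : 0 < a) (hb : 0 < b) (hak : ∀ k, 0 ≤ ak k) (hbj : ∀ j, 0 ≤ bj j)
    (hsum : α + γ + ∑ k, αk k ≤ 1) (hβγ : β ≤ γ)
    (θ : ℝ) (hθπ : θ < Real.pi)
    (z : ℂ) (hz0 : 0 < |z.arg|) (hzθ : |z.arg| < θ) :
    |(z ^ (γ : ℂ) * (1 + (a : ℂ) * z ^ (α : ℂ) + ∑ k, (ak k : ℂ) * z ^ (αk k : ℂ)) *
        (1 + (b : ℂ) * z ^ (β : ℂ) + ∑ j, (bj j : ℂ) * z ^ (βj j : ℂ))⁻¹).arg| ≤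
      (α + γ + ∑ k, αk k) * |z.arg| ∧
    (α + γ + ∑ k, αk k) * |z.arg| ≤ θ ∧
    (z ^ (γ : ℂ) * (1 + (a : ℂ) * z ^ (α : ℂ) + ∑ k, (ak k : ℂ) * z ^ (αk k : ℂ)) *
        (1 + (b : ℂ) * z ^ (β : ℂ) + ∑ j, (bj j : ℂ) * z ^ (βj j : ℂ))⁻¹) ≠ 0 ∧
    |(z ^ (γ : ℂ) * (1 + (a : ℂ) * z ^ (α : ℂ) + ∑ k, (ak k : ℂ) * z ^ (αk k : ℂ)) *
        (1 + (b : ℂ) * z ^ (β : ℂ) + ∑ j, (bj j : ℂ) * z ^ (βj j : ℂ))⁻¹).arg| < θ := by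
  have hwidth : (α + γ + ∑ k, αk k) * |z.arg| ≤ |z.arg| :=
    mul_le_of_le_one_left (abs_nonneg _) hsum
  have hmono : (α + γ) * |z.arg| ≤ (α + γ + ∑ k, αk k) * |z.arg| :=
    mul_le_mul_of_nonneg_right
      (le_add_of_nonneg_right (Finset.sum_nonneg fun k _ => (hαk k).1.le)) (abs_nonneg _)
  obtain ⟨hne, harg⟩ := abs_arg_powerSumRatio_le (γ := γ) (ak := ak) (bj := bj) hα hβ hβγ ha hb
    hak hbj (fun k => ⟨(hαk k).1.le, (hαk k).2.le⟩) (fun j => ⟨(hβj j).1.le, (hβj j).2.le⟩)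
    (abs_pos.1 hz0) (by linarith)
  have hle := harg.trans hmono
  exact ⟨hle, hwidth.trans hzθ.le, hne, hle.trans_lt (hwidth.trans_lt hzθ)⟩

/-- Under the stated parameter constraints (including `α + γ + Σ α_k ≤ 1` and `β ≤ γ`),
for every `z` with `0 < |arg z| < θ` with `θ ∈ (π/2, π)`, the value
`η z = z^γ (1 + a z^α + Σ_k a_k z^{α_k}) (1 + b z^β + Σ_j b_j z^{β_j})⁻¹`
satisfies `|arg (η z)| ≤ (α + γ + Σ α_k) |arg z| ≤ θ`; in particular `η z` lies in the
sector `Σ_θ = {w ≠ 0 : |arg w| < θ}`. -/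
theorem stmt_4 (K J : ℕ) (α β γ a b : ℝ) (αk : Fin K → ℝ) (βj : Fin J → ℝ)
    (ak : Fin K → ℝ) (bj : Fin J → ℝ)
    (hα : 0 < α) (hα1 : α ≤ 1) (hβ : 0 < β) (hβ1 : β ≤ 1) (hγ : 0 < γ) (hγ1 : γ ≤ 1)
    (hαk : ∀ k, 0 < αk k ∧ αk k < α) (hβj : ∀ j, 0 < βj j ∧ βj j < β)
    (ha : 0 < a) (hb : 0 < b) (hak : ∀ k, 0 ≤ ak k) (hbj : ∀ j, 0 ≤ bj j)
    (hsum : α + γ + ∑ k, αk k ≤ 1) (hβγ : β ≤ γ)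
    (θ : ℝ) (hθ : Real.pi / 2 < θ) (hθπ : θ < Real.pi)
    (z : ℂ) (hz0 : 0 < |z.arg|) (hzθ : |z.arg| < θ) :
    |(z ^ (γ : ℂ) * (1 + (a : ℂ) * z ^ (α : ℂ) + ∑ k, (ak k : ℂ) * z ^ (αk k : ℂ)) *
        (1 + (b : ℂ) * z ^ (β : ℂ) + ∑ j, (bj j : ℂ) * z ^ (βj j : ℂ))⁻¹).arg| ≤
      (α + γ + ∑ k, αk k) * |z.arg| ∧
    (α + γ + ∑ k, αk k) * |z.arg| ≤ θ ∧
    (z ^ (γ : ℂ) * (1 + (a : ℂ) * z ^ (α : ℂ) + ∑ k, (ak k : ℂ) * z ^ (αk k : ℂ)) *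
        (1 + (b : ℂ) * z ^ (β : ℂ) + ∑ j, (bj j : ℂ) * z ^ (βj j : ℂ))⁻¹) ≠ 0 ∧
    |(z ^ (γ : ℂ) * (1 + (a : ℂ) * z ^ (α : ℂ) + ∑ k, (ak k : ℂ) * z ^ (αk k : ℂ)) *
        (1 + (b : ℂ) * z ^ (β : ℂ) + ∑ j, (bj j : ℂ) * z ^ (βj j : ℂ))⁻¹).arg| < θ :=
  stmt_4_general K J α β γ a b αk βj ak bj hα hβ hαk hβj ha hb hak hbj hsum hβγ θ hθπ z hz0 hzθ
end

section
/- For real l' with 0 < l' < π/2 and all real x, the complex number cos(l' - ix) and 1 - sin(l' - ix) satisfy |cos(l' - ix)| / |1 - sin(l' - ix)| ≤ √((1 + sin l')/(1 - sin l')). -/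
open Complex

/-! With `s = sin l'` and `t = cosh x`, the addition formulas give
`‖cos (l' - i x)‖² = t² - s²` and `‖1 - sin (l' - i x)‖ = t - s`, so the quotient is
`√((t + s) / (t - s))`. For `0 ≤ s < 1` this is decreasing in `t ≥ 1`, hence maximal at `x = 0`. -/

theorem cos_ofReal_sub_I_mul_ofReal (a x : ℝ) :
    cos ((a : ℂ) - I * x) =
      ((Real.cos a * Real.cosh x : ℝ) : ℂ) + ((Real.sin a * Real.sinh x : ℝ) : ℂ) * I := by
  rw [mul_comm I, cos_sub, cos_mul_I, sin_mul_I]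
  push_cast
  ring

theorem one_sub_sin_ofReal_sub_I_mul_ofReal (a x : ℝ) :
    1 - sin ((a : ℂ) - I * x) =
      ((1 - Real.sin a * Real.cosh x : ℝ) : ℂ) + ((Real.cos a * Real.sinh x : ℝ) : ℂ) * I := by
  rw [mul_comm I, sin_sub, cos_mul_I, sin_mul_I]
  push_cast
  ring

theorem norm_cos_ofReal_sub_I_mul_ofReal (a x : ℝ) :
    ‖cos ((a : ℂ) - I * x)‖ = √(Real.cosh x ^ 2 - Real.sin a ^ 2) := by
  rw [cos_ofReal_sub_I_mul_ofReal, norm_add_mul_I]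
  congr 1
  linear_combination (Real.cosh x ^ 2) * Real.cos_sq_add_sin_sq a
    - Real.sin a ^ 2 * Real.cosh_sq x

theorem norm_one_sub_sin_ofReal_sub_I_mul_ofReal (a x : ℝ) :
    ‖1 - sin ((a : ℂ) - I * x)‖ = Real.cosh x - Real.sin a := by
  have hsin_le_cosh : Real.sin a ≤ Real.cosh x :=
    (Real.sin_le_one a).trans (Real.one_le_cosh x)
  rw [one_sub_sin_ofReal_sub_I_mul_ofReal, norm_add_mul_I,
    ← Real.sqrt_sq (sub_nonneg.mpr hsin_le_cosh)]
  congr 1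
  linear_combination (Real.cosh x ^ 2 - 1) * Real.sin_sq_add_cos_sq a
    - Real.cos a ^ 2 * Real.cosh_sq x

theorem sqrt_sq_sub_sq_div_sub {s t : ℝ} (hst : s < t) :
    √(t ^ 2 - s ^ 2) / (t - s) = √((t + s) / (t - s)) := by
  have hpos : 0 < t - s := sub_pos.mpr hst
  rw [show (t + s) / (t - s) = (t ^ 2 - s ^ 2) / (t - s) ^ 2 by field_simp; ring,
    Real.sqrt_div' _ (sq_nonneg _), Real.sqrt_sq hpos.le]

theorem add_div_sub_le_one_add_div_one_sub {s t : ℝ} (hs0 : 0 ≤ s) (hs1 : s < 1) (ht : 1 ≤ t) :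
    (t + s) / (t - s) ≤ (1 + s) / (1 - s) := by
  rw [div_le_div_iff₀ (by linarith) (by linarith)]
  nlinarith [mul_nonneg hs0 (sub_nonneg.mpr ht)]

/-- For `0 < l' < π/2` and all real `x`,
`|cos (l' - i x)| / |1 - sin (l' - i x)| ≤ √((1 + sin l') / (1 - sin l'))`. -/
theorem stmt_9 (l' : ℝ) (hl0 : 0 < l') (hl : l' < Real.pi / 2) (x : ℝ) :
    ‖Complex.cos ((l' : ℂ) - Complex.I * (x : ℂ))‖ /
      ‖1 - Complex.sin ((l' : ℂ) - Complex.I * (x : ℂ))‖ ≤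
      Real.sqrt ((1 + Real.sin l') / (1 - Real.sin l')) := by
  have hs0 : 0 ≤ Real.sin l' :=
    Real.sin_nonneg_of_nonneg_of_le_pi hl0.le (by linarith [Real.pi_pos])
  have hs1 : Real.sin l' < 1 := by
    rw [← Real.sin_pi_div_two]
    exact Real.sin_lt_sin_of_lt_of_le_pi_div_two (by linarith) le_rfl hl
  have hch : 1 ≤ Real.cosh x := Real.one_le_cosh x
  rw [norm_cos_ofReal_sub_I_mul_ofReal, norm_one_sub_sin_ofReal_sub_I_mul_ofReal,
    sqrt_sq_sub_sq_div_sub (by linarith)]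
  exact Real.sqrt_le_sqrt (add_div_sub_le_one_add_div_one_sub hs0 hs1 hch)
end

section
/- If f and g are Bernstein functions on (0,∞) and h is completely monotone on (0,∞), then the composition h ∘ f is completely monotone and f ∘ g is a Bernstein function. -/
/-- `g` is completely monotone on `(0,∞)`. -/
def CompletelyMonotoneOn (g : ℝ → ℝ) : Prop :=
  ContDiffOn ℝ (⊤ : ℕ∞) g (Set.Ioi 0) ∧
    ∀ n : ℕ, ∀ ξ : ℝ, 0 < ξ → 0 ≤ (-1 : ℝ) ^ n * iteratedDeriv n g ξ

/-- `f` is a Bernstein function on `(0,∞)`. -/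
def BernsteinOn (f : ℝ → ℝ) : Prop :=
  ContDiffOn ℝ (⊤ : ℕ∞) f (Set.Ioi 0) ∧ (∀ ξ : ℝ, 0 < ξ → 0 ≤ f ξ) ∧
    ∀ n : ℕ, 1 ≤ n → ∀ ξ : ℝ, 0 < ξ → 0 ≤ (-1 : ℝ) ^ (n - 1) * iteratedDeriv n f ξ

namespace Stmt14Aux

open Set

/-- The monomial `h^{(k)}(f x) * ∏_{m ∈ l} f^{(m)}(x)`. -/
noncomputable def mono (h f : ℝ → ℝ) (k : ℕ) (l : List ℕ) (x : ℝ) : ℝ :=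
  iteratedDeriv k h (f x) * (l.map (fun m => iteratedDeriv m f x)).prod

lemma mono_nil {h f : ℝ → ℝ} {k : ℕ} {x : ℝ} : mono h f k [] x = iteratedDeriv k h (f x) := by
  simp [mono]

lemma mono_cons {h f : ℝ → ℝ} {k m : ℕ} {l : List ℕ} {x : ℝ} :
    mono h f k (m :: l) x = iteratedDeriv m f x * mono h f k l x := by
  simp [mono]; ring

lemma mono_nil_fun {h f : ℝ → ℝ} {k : ℕ} :
    mono h f k [] = (iteratedDeriv k h) ∘ f := by
  funext x; simp [mono]

lemma mono_cons_fun {h f : ℝ → ℝ} {k m : ℕ} {l : List ℕ} :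
    mono h f k (m :: l) = fun x => iteratedDeriv m f x * mono h f k l x := by
  funext x; exact mono_cons

/-- All ways of incrementing one entry of a list. -/
def inc : List ℕ → List (List ℕ)
  | [] => []
  | m :: l => ((m + 1) :: l) :: (inc l).map (m :: ·)

/-- The monomials appearing in the derivative of a monomial. -/
def step (p : ℕ × List ℕ) : List (ℕ × List ℕ) :=
  (p.1 + 1, 1 :: p.2) :: (inc p.2).map (p.1, ·)

/-- The list of monomials in the `n`-th derivative of `h ∘ f`. -/
def L : ℕ → List (ℕ × List ℕ)
  | 0 => [(0, [])]
  | n + 1 => ((L n).map step).flatten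

lemma diffAt_iter {u : ℝ → ℝ} (hu : ContDiffOn ℝ (⊤ : ℕ∞) u (Set.Ioi 0)) (k : ℕ) {x : ℝ}
    (hx : 0 < x) : DifferentiableAt ℝ (iteratedDeriv k u) x := by
  have h1 : DifferentiableWithinAt ℝ (iteratedDerivWithin k u (Set.Ioi 0)) (Set.Ioi 0) x :=
    (hu.differentiableOn_iteratedDerivWithin (by exact_mod_cast lt_top_iff_ne_top.2 (by simp))
      (isOpen_Ioi.uniqueDiffOn)) x hx
  have h2 : DifferentiableAt ℝ (iteratedDerivWithin k u (Set.Ioi 0)) x :=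
    h1.differentiableAt (isOpen_Ioi.mem_nhds hx)
  apply h2.congr_of_eventuallyEq
  filter_upwards [isOpen_Ioi.mem_nhds hx] with y hy
  rw [iteratedDerivWithin_eq_iteratedFDerivWithin, iteratedDeriv_eq_iteratedFDeriv,
    iteratedFDerivWithin_of_isOpen k isOpen_Ioi hy]

lemma diffAt_f {u : ℝ → ℝ} (hu : ContDiffOn ℝ (⊤ : ℕ∞) u (Set.Ioi 0)) {x : ℝ} (hx : 0 < x) :
    DifferentiableAt ℝ u x := by
  have := diffAt_iter hu 0 hx
  rwa [iteratedDeriv_zero] at this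

variable {h f : ℝ → ℝ}

section

variable (hh : ContDiffOn ℝ (⊤ : ℕ∞) h (Set.Ioi 0)) (hf : ContDiffOn ℝ (⊤ : ℕ∞) f (Set.Ioi 0))
  (hfpos : ∀ x : ℝ, 0 < x → 0 < f x)

include hh hf hfpos

lemma mono_diff : ∀ (l : List ℕ) (k : ℕ) (x : ℝ), 0 < x →
    DifferentiableAt ℝ (mono h f k l) x := by
  intro l
  induction l with
  | nil =>
    intro k x hx
    rw [mono_nil_fun]
    exact (diffAt_iter hh k (hfpos x hx)).comp x (diffAt_f hf hx)
  | cons m l ih =>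
    intro k x hx
    rw [mono_cons_fun]
    exact (diffAt_iter hf m hx).mul (ih k x hx)

omit hh hf hfpos in
lemma mul_sum_mono (m k : ℕ) (x : ℝ) : ∀ (M : List (List ℕ)),
    iteratedDeriv m f x * ((M.map fun l' => mono h f k l' x)).sum
      = ((M.map fun l' => mono h f k (m :: l') x)).sum := by
  intro M
  induction M with
  | nil => simp
  | cons l' M ih =>
    simp only [List.map_cons, List.sum_cons, mul_add, ih, mono_cons]

lemma mono_deriv : ∀ (l : List ℕ) (k : ℕ) (x : ℝ), 0 < x →
    deriv (mono h f k l) x = ((step (k, l)).map (fun p => mono h f p.1 p.2 x)).sum := by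
  intro l
  induction l with
  | nil =>
    intro k x hx
    have H1 : HasDerivAt (iteratedDeriv k h) (deriv (iteratedDeriv k h) (f x)) (f x) :=
      (diffAt_iter hh k (hfpos x hx)).hasDerivAt
    have H2 : HasDerivAt f (deriv f x) x := (diffAt_f hf hx).hasDerivAt
    rw [mono_nil_fun, (H1.comp x H2).deriv]
    simp only [step, inc, List.map_nil, List.map_cons, List.sum_cons, List.sum_nil, add_zero]
    rw [mono_cons, mono_nil, iteratedDeriv_one, iteratedDeriv_succ]
    ring
  | cons m l ih =>
    intro k x hx
    have hd1 : DifferentiableAt ℝ (iteratedDeriv m f) x := diffAt_iter hf m hx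
    have hd2 : DifferentiableAt ℝ (mono h f k l) x := mono_diff hh hf hfpos l k x hx
    have key : deriv (mono h f k (m :: l)) x
        = deriv (iteratedDeriv m f) x * mono h f k l x
          + iteratedDeriv m f x * deriv (mono h f k l) x := by
      rw [mono_cons_fun, deriv_fun_mul hd1 hd2]
    rw [key, ih k x hx, ← iteratedDeriv_succ]
    -- expand the sum over `step (k, l)`
    simp only [step, inc, List.map_cons, List.sum_cons, List.map_map, Function.comp_def]
    rw [mul_add]
    rw [mul_sum_mono m k x (inc l)]
    have e1 : iteratedDeriv m f x * mono h f (k + 1) (1 :: l) x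
        = mono h f (k + 1) (1 :: m :: l) x := by
      rw [mono_cons, mono_cons, mono_cons]; ring
    have e2 : iteratedDeriv (m + 1) f x * mono h f k l x = mono h f k ((m + 1) :: l) x :=
      mono_cons.symm
    rw [e1, e2]
    ring

lemma listsum_diff (M : List (ℕ × List ℕ)) (x : ℝ) (hx : 0 < x) :
    DifferentiableAt ℝ (fun y => (M.map (fun p => mono h f p.1 p.2 y)).sum) x := by
  induction M with
  | nil => simpa using differentiableAt_const (0 : ℝ)
  | cons p M ih =>
    simp only [List.map_cons, List.sum_cons]
    exact (mono_diff hh hf hfpos p.2 p.1 x hx).add ih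

lemma listsum_deriv (M : List (ℕ × List ℕ)) (x : ℝ) (hx : 0 < x) :
    deriv (fun y => (M.map (fun p => mono h f p.1 p.2 y)).sum) x
      = (M.map (fun p => deriv (mono h f p.1 p.2) x)).sum := by
  induction M with
  | nil => simp
  | cons p M ih =>
    simp only [List.map_cons, List.sum_cons]
    rw [deriv_fun_add (mono_diff hh hf hfpos p.2 p.1 x hx) (listsum_diff hh hf hfpos M x hx), ih]

lemma expand : ∀ (n : ℕ) (x : ℝ), 0 < x →
    iteratedDeriv n (h ∘ f) x = ((L n).map (fun p => mono h f p.1 p.2 x)).sum := by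
  intro n
  induction n with
  | zero =>
    intro x hx
    simp [L, mono, iteratedDeriv_zero, Function.comp]
  | succ n ih =>
    intro x hx
    rw [iteratedDeriv_succ]
    have e1 : deriv (iteratedDeriv n (h ∘ f)) x
        = deriv (fun y => ((L n).map (fun p => mono h f p.1 p.2 y)).sum) x := by
      apply Filter.EventuallyEq.deriv_eq
      filter_upwards [isOpen_Ioi.mem_nhds hx] with y hy
      exact ih y hy
    rw [e1, listsum_deriv hh hf hfpos (L n) x hx]
    have e2 : ((L n).map (fun p => deriv (mono h f p.1 p.2) x)).sum
        = ((L n).map (fun p => ((step p).map (fun q => mono h f q.1 q.2 x)).sum)).sum := by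
      congr 1
      apply List.map_congr_left
      intro p _
      exact mono_deriv hh hf hfpos p.2 p.1 x hx
    rw [e2]
    show _ = ((L (n+1)).map (fun q => mono h f q.1 q.2 x)).sum
    rw [show L (n+1) = ((L n).map step).flatten from rfl]
    rw [List.map_flatten, List.sum_flatten, List.map_map, List.map_map]
    rfl

end

lemma inc_mem : ∀ (l l' : List ℕ), l' ∈ inc l → (∀ m ∈ l, 1 ≤ m) →
    l'.length = l.length ∧ l'.sum = l.sum + 1 ∧ ∀ m ∈ l', 1 ≤ m := by
  intro l
  induction l with
  | nil => intro l' h'; simp [inc] at h'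
  | cons m l ih =>
    intro l' h' hl
    simp only [inc, List.mem_cons, List.mem_map] at h'
    rcases h' with rfl | ⟨l'', hl'', rfl⟩
    · refine ⟨by simp, by simp only [List.sum_cons]; omega, ?_⟩
      intro a ha
      simp only [List.mem_cons] at ha
      rcases ha with rfl | ha
      · omega
      · exact hl a (List.mem_cons_of_mem _ ha)
    · obtain ⟨e1, e2, e3⟩ := ih l'' hl'' (fun a ha => hl a (List.mem_cons_of_mem _ ha))
      refine ⟨by simp [e1], by simp only [List.sum_cons]; omega, ?_⟩
      intro a ha
      simp only [List.mem_cons] at ha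
      rcases ha with rfl | ha
      · exact hl a (by simp)
      · exact e3 a ha

lemma L_mem : ∀ (n : ℕ) (p : ℕ × List ℕ), p ∈ L n →
    p.2.length = p.1 ∧ p.2.sum = n ∧ ∀ m ∈ p.2, 1 ≤ m := by
  intro n
  induction n with
  | zero => intro p hp; simp [L] at hp; simp [hp]
  | succ n ih =>
    intro p hp
    rw [show L (n+1) = ((L n).map step).flatten from rfl, List.mem_flatten] at hp
    obtain ⟨M, hM, hpM⟩ := hp
    rw [List.mem_map] at hM
    obtain ⟨q, hq, rfl⟩ := hM
    obtain ⟨e1, e2, e3⟩ := ih q hq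
    simp only [step, List.mem_cons, List.mem_map] at hpM
    rcases hpM with rfl | ⟨l', hl', rfl⟩
    · refine ⟨by simp [e1], by simp only [List.sum_cons]; omega, ?_⟩
      intro a ha
      simp only [List.mem_cons] at ha
      rcases ha with rfl | ha
      · exact le_refl 1
      · exact e3 a ha
    · obtain ⟨d1, d2, d3⟩ := inc_mem q.2 l' hl' e3
      exact ⟨by simp [d1, e1], by simp only []; omega, d3⟩

lemma mono_nonneg (hfB : ∀ m : ℕ, 1 ≤ m → ∀ x : ℝ, 0 < x →
      0 ≤ (-1 : ℝ) ^ (m - 1) * iteratedDeriv m f x) :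
    ∀ (l : List ℕ), (∀ m ∈ l, 1 ≤ m) → ∀ (k j : ℕ) (x : ℝ), 0 < x →
      0 ≤ (-1 : ℝ) ^ j * iteratedDeriv k h (f x) →
      0 ≤ (-1 : ℝ) ^ (l.length + l.sum + j) * mono h f k l x := by
  intro l
  induction l with
  | nil => intro _ k j x hx hj; simpa [mono_nil] using hj
  | cons m l ih =>
    intro hl k j x hx hj
    have hm : 1 ≤ m := hl m (by simp)
    have h1 : 0 ≤ (-1 : ℝ) ^ (m - 1) * iteratedDeriv m f x := hfB m hm x hx
    have h2 : 0 ≤ (-1 : ℝ) ^ (l.length + l.sum + j) * mono h f k l x :=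
      ih (fun a ha => hl a (List.mem_cons_of_mem _ ha)) k j x hx hj
    have he : (-1 : ℝ) ^ ((m :: l).length + (m :: l).sum + j)
        = (-1 : ℝ) ^ (m - 1) * (-1 : ℝ) ^ (l.length + l.sum + j) := by
      rw [show (m :: l).length + (m :: l).sum + j = (m - 1) + (l.length + l.sum + j) + 2 by
        simp only [List.length_cons, List.sum_cons]; omega]
      rw [pow_add, pow_add]
      norm_num
    rw [he, mono_cons]
    nlinarith [mul_nonneg h1 h2]

lemma neg_one_pow_eq_of_parity {a b : ℕ} (hab : a % 2 = b % 2) : (-1 : ℝ) ^ a = (-1 : ℝ) ^ b := by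
  rcases Nat.even_or_odd a with ha | ha
  · rw [ha.neg_one_pow, (by rw [Nat.even_iff] at *; omega : Even b).neg_one_pow]
  · rw [ha.neg_one_pow, (by rw [Nat.odd_iff] at *; omega : Odd b).neg_one_pow]

/-- Core result: sign of iterated derivatives of a composition. -/
lemma comp_sign (hh : ContDiffOn ℝ (⊤ : ℕ∞) h (Set.Ioi 0)) (hf : ContDiffOn ℝ (⊤ : ℕ∞) f (Set.Ioi 0))
    (hfpos : ∀ x : ℝ, 0 < x → 0 < f x)
    (hfB : ∀ m : ℕ, 1 ≤ m → ∀ x : ℝ, 0 < x →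
      0 ≤ (-1 : ℝ) ^ (m - 1) * iteratedDeriv m f x) :
    (∀ (hhCM : ∀ k : ℕ, ∀ y : ℝ, 0 < y → 0 ≤ (-1 : ℝ) ^ k * iteratedDeriv k h y)
        (n : ℕ) (x : ℝ), 0 < x → 0 ≤ (-1 : ℝ) ^ n * iteratedDeriv n (h ∘ f) x) ∧
    (∀ (hhB : ∀ k : ℕ, 1 ≤ k → ∀ y : ℝ, 0 < y →
        0 ≤ (-1 : ℝ) ^ (k - 1) * iteratedDeriv k h y)
        (n : ℕ), 1 ≤ n → ∀ x : ℝ, 0 < x →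
        0 ≤ (-1 : ℝ) ^ (n - 1) * iteratedDeriv n (h ∘ f) x) := by
  constructor
  · intro hhCM n x hx
    rw [expand hh hf hfpos n x hx, ← List.sum_map_mul_left]
    apply List.sum_nonneg
    intro a ha
    rw [List.mem_map] at ha
    obtain ⟨p, hp, rfl⟩ := ha
    obtain ⟨e1, e2, e3⟩ := L_mem n p hp
    have := mono_nonneg hfB p.2 e3 p.1 p.1 x hx (hhCM p.1 (f x) (hfpos x hx))
    rw [e1, e2] at this
    rwa [neg_one_pow_eq_of_parity (a := n) (b := p.1 + n + p.1) (by omega)]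
  · intro hhB n hn x hx
    rw [expand hh hf hfpos n x hx, ← List.sum_map_mul_left]
    apply List.sum_nonneg
    intro a ha
    rw [List.mem_map] at ha
    obtain ⟨p, hp, rfl⟩ := ha
    obtain ⟨e1, e2, e3⟩ := L_mem n p hp
    have hk1 : 1 ≤ p.1 := by
      rcases p with ⟨k, l⟩
      cases l with
      | nil => simp at e2; omega
      | cons a l => simp at e1; omega
    have := mono_nonneg hfB p.2 e3 p.1 (p.1 - 1) x hx (hhB p.1 hk1 (f x) (hfpos x hx))
    rw [e1, e2] at this
    rwa [neg_one_pow_eq_of_parity (a := n - 1) (b := p.1 + n + (p.1 - 1)) (by omega)]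

end Stmt14Aux

/-- If `f`, `g` are Bernstein functions mapping `(0,∞)` into `(0,∞)` and `h` is
completely monotone, then `h ∘ f` is completely monotone and `f ∘ g` is a
Bernstein function. -/
theorem stmt_14 (f g h : ℝ → ℝ)
    (hf : BernsteinOn f) (hg : BernsteinOn g) (hh : CompletelyMonotoneOn h)
    (hfpos : ∀ ξ : ℝ, 0 < ξ → 0 < f ξ) (hgpos : ∀ ξ : ℝ, 0 < ξ → 0 < g ξ) :
    CompletelyMonotoneOn (h ∘ f) ∧ BernsteinOn (f ∘ g) := by
  obtain ⟨hhs, hhCM⟩ := hh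
  obtain ⟨hfs, hfnn, hfB⟩ := hf
  obtain ⟨hgs, hgnn, hgB⟩ := hg
  constructor
  · refine ⟨hhs.comp hfs (fun x hx => hfpos x hx), ?_⟩
    intro n ξ hξ
    exact (Stmt14Aux.comp_sign hhs hfs hfpos (fun m hm x hx => hfB m hm x hx)).1
      (fun k y hy => hhCM k y hy) n ξ hξ
  · refine ⟨hfs.comp hgs (fun x hx => hgpos x hx), ?_, ?_⟩
    · intro ξ hξ
      exact hfnn (g ξ) (hgpos ξ hξ)
    · intro n hn ξ hξ
      exact (Stmt14Aux.comp_sign hfs hgs hgpos (fun m hm x hx => hgB m hm x hx)).2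
        (fun k hk y hy => hfB k hk y hy) n hn ξ hξ
end
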